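/- arXiv:1310.0120 — 6 statements merged into one kernel-verified Lean document; each statement's English description precedes it below -/
import Mathlib

section
/- For every prime p and all non-negative integers λ, μ < p with λ + μ ≥ 1, there exists a (λ,μ;p)-covering set S ⊆ Z_p with #S ≤ 2·⌈p / max{λ,μ}⌉ − 1. -/
/-!
Put `k = max λ μ` and `n = ⌈p / k⌉`, so that `p ≤ n k`. For `a ≠ 0`, the `k + 1` residues
`i a⁻¹` (`0 ≤ i ≤ k`) fall into the `k` blocks `[t n, (t + 1) n)` of `[0, p)`, so two of them lie in
the same block: `m a⁻¹ = r` with `1 ≤ m ≤ k` and `|r| < n`, that is `a = m r⁻¹`. Hence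
`S = {r⁻¹ : |r| < n}` is a covering set of size at most `2n - 1`; replacing `(m, r)` by `(-m, -r)`
if necessary puts `m` into `[-μ, λ]`.
-/

/-- `S ⊆ Z_q` is a `(lam, mu; q)`-covering set: every residue class `a` modulo `q`
can be written as `m * s` with `m ∈ {-mu, …, lam} \ {0}` and `s ∈ S`. -/
def IsCoveringSet (q lam mu : ℕ) (S : Finset (ZMod q)) : Prop :=
  ∀ a : ZMod q, ∃ m : ℤ, -(mu : ℤ) ≤ m ∧ m ≤ (lam : ℤ) ∧ m ≠ 0 ∧
    ∃ s ∈ S, (m : ZMod q) * s = a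

open Finset

lemma Int.abs_sub_lt_of_div_eq {a b n : ℕ} (hn : 0 < n) (h : a / n = b / n) :
    |(b : ℤ) - a| < n := by
  have ha := Nat.mod_add_div a n
  have hb := Nat.mod_add_div b n
  have := Int.abs_sub_lt_of_lt_lt (Nat.mod_lt a hn) (Nat.mod_lt b hn)
  rw [h] at ha
  convert this using 2
  omega

theorem ZMod.exists_intCast_mul_eq_intCast_of_le_mul {p k n : ℕ} [NeZero p] (hpnk : p ≤ n * k)
    (b : ZMod p) : ∃ m : ℤ, 1 ≤ m ∧ m ≤ k ∧ ∃ r : ℤ, |r| < n ∧ (m : ZMod p) * b = r := by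
  have hn : 0 < n := Nat.pos_of_mul_pos_right ((NeZero.pos p).trans_le hpnk)
  have hmaps : ∀ i ∈ range (k + 1), ((i : ZMod p) * b).val / n ∈ range k := fun i _ =>
    mem_range.2 (Nat.div_lt_of_lt_mul ((ZMod.val_lt _).trans_le hpnk))
  obtain ⟨i, hi, j, hj, hij, hblock⟩ :=
    exists_ne_map_eq_of_card_lt_of_maps_to (by simp) hmaps
  wlog hlt : i < j generalizing i j
  · exact this j hj i hi hij.symm hblock.symm (by omega)
  rw [mem_range] at hj
  refine ⟨j - i, by omega, by omega, _, Int.abs_sub_lt_of_div_eq hn hblock, ?_⟩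
  push_cast
  rw [ZMod.natCast_zmod_val, ZMod.natCast_zmod_val]
  ring

/-- Holds also for `a = 0`, where `r = 0` and `0⁻¹ = 0`. -/
theorem ZMod.exists_intCast_mul_inv_eq_of_le_mul {p k n : ℕ} [Fact p.Prime] (hkp : k < p)
    (hpnk : p ≤ n * k) (a : ZMod p) :
    ∃ m : ℤ, 1 ≤ m ∧ m ≤ k ∧ ∃ r : ℤ, |r| < n ∧ (m : ZMod p) * (r : ZMod p)⁻¹ = a := by
  obtain ⟨m, hm1, hmk, r, hr, hmr⟩ := exists_intCast_mul_eq_intCast_of_le_mul hpnk a⁻¹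
  have hm0 : (m : ZMod p) ≠ 0 := by
    lift m to ℕ using (by omega)
    rw [Int.cast_natCast, Ne, natCast_eq_zero_iff]
    exact fun hdvd => by have := Nat.le_of_dvd (by omega) hdvd; omega
  refine ⟨m, hm1, hmk, r, hr, ?_⟩
  rw [← hmr, mul_inv, inv_inv, mul_inv_cancel_left₀ hm0]

noncomputable def smallInverses (p n : ℕ) : Finset (ZMod p) :=
  (Ioo (-(n : ℤ)) n).image fun r : ℤ => (r : ZMod p)⁻¹

lemma inv_mem_smallInverses {p n : ℕ} {r : ℤ} (hr : |r| < n) :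
    (r : ZMod p)⁻¹ ∈ smallInverses p n :=
  mem_image_of_mem _ (mem_Ioo.2 (abs_lt.1 hr))

lemma card_smallInverses_le (p n : ℕ) : #(smallInverses p n) ≤ 2 * n - 1 :=
  card_image_le.trans (by rw [Int.card_Ioo]; omega)

theorem isCoveringSet_smallInverses {p lam mu n : ℕ} [Fact p.Prime] (hlam : lam < p)
    (hmu : mu < p) (hpnk : p ≤ n * max lam mu) :
    IsCoveringSet p lam mu (smallInverses p n) := by
  intro a
  obtain ⟨m, hm1, hmk, r, hr, hmr⟩ :=
    ZMod.exists_intCast_mul_inv_eq_of_le_mul (max_lt hlam hmu) hpnk a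
  rcases le_total mu lam with hle | hle
  · exact ⟨m, by omega, by omega, by omega, _, inv_mem_smallInverses hr, hmr⟩
  · refine ⟨-m, by omega, by omega, by omega, _, inv_mem_smallInverses (r := -r) ?_, ?_⟩
    · rwa [abs_neg]
    · rw [Int.cast_neg, Int.cast_neg, inv_neg, neg_mul_neg, hmr]

lemma le_ceil_div_mul {p k : ℕ} (hk : 0 < k) : p ≤ ⌈(p : ℚ) / k⌉₊ * k := by
  have hkQ : (0 : ℚ) < k := by exact_mod_cast hk
  exact_mod_cast (div_le_iff₀ hkQ).1 (Nat.le_ceil ((p : ℚ) / k))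

theorem stmt1 (p : ℕ) (hp : p.Prime) (lam mu : ℕ) (hlam : lam < p) (hmu : mu < p)
    (h : 1 ≤ lam + mu) :
    ∃ S : Finset (ZMod p), IsCoveringSet p lam mu S ∧
      S.card ≤ 2 * ⌈(p : ℚ) / (max lam mu : ℚ)⌉₊ - 1 := by
  have := Fact.mk hp
  have hk : 0 < max lam mu := by omega
  refine ⟨smallInverses p ⌈(p : ℚ) / (max lam mu : ℕ)⌉₊,
    isCoveringSet_smallInverses hlam hmu (le_ceil_div_mul hk), ?_⟩
  rw [← Nat.cast_max]
  exact card_smallInverses_le _ _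
end

section
/- Let p be a prime, ℓ ≥ 2 an integer, and suppose p^j ≤ λ < p^{j+1} for some integer j with 1 ≤ j < ℓ and λ < p^ℓ. Then the set S = {s_0 + s_1·p^j : s_0 ∈ {p^i : i = 0, …, j−1} ∪ {0}, 0 ≤ s_1 < p^{ℓ−j}} is a (λ,0;p^ℓ)-covering set of Z_{p^ℓ} of cardinality (j+1)·p^{ℓ−j}, and (j+1)·p^{ℓ−j} < (j+1)·p^ℓ/λ^{1/2}. -/
def coveringDigits (p j : ℕ) : Finset ℕ :=
  (Finset.range j).image (fun i => p ^ i) ∪ {0}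

def coveringSet (p ℓ j : ℕ) : Finset (ZMod (p ^ ℓ)) :=
  (coveringDigits p j ×ˢ Finset.range (p ^ (ℓ - j))).image
    (fun x => ((x.1 + x.2 * p ^ j : ℕ) : ZMod (p ^ ℓ)))

lemma Nat.exists_eq_mul_pow_add_mul_pow {p j n : ℕ} (hp : p.Prime) (hn : ¬ p ^ j ∣ n) :
    ∃ v < j, ∃ m, m.Coprime p ∧ m < p ^ j ∧ ∃ t, n = m * p ^ v + t * p ^ j := by
  set r := n % p ^ j
  have hr0 : r ≠ 0 := fun h => hn (Nat.dvd_of_mod_eq_zero h)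
  have hrlt : r < p ^ j := Nat.mod_lt n (pow_pos hp.pos j)
  have hr : p ^ r.factorization p * (r / p ^ r.factorization p) = r :=
    Nat.ordProj_mul_ordCompl_eq_self r p
  refine ⟨r.factorization p, ?_, r / p ^ r.factorization p,
    (Nat.coprime_ordCompl hp hr0).symm, (Nat.div_le_self _ _).trans_lt hrlt, n / p ^ j, ?_⟩
  · have : p ^ r.factorization p < p ^ j :=
      (Nat.le_of_dvd (Nat.pos_of_ne_zero hr0) (Nat.ordProj_dvd r p)).trans_lt hrlt
    exact (Nat.pow_lt_pow_iff_right hp.one_lt).mp this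
  · rw [mul_comm _ (p ^ _), hr, add_comm, mul_comm]
    exact (Nat.div_add_mod n (p ^ j)).symm

lemma coveringDigits_lt {p j x : ℕ} (hp : 1 < p) (hx : x ∈ coveringDigits p j) : x < p ^ j := by
  simp only [coveringDigits, Finset.mem_union, Finset.mem_image, Finset.mem_range,
    Finset.mem_singleton] at hx
  rcases hx with ⟨i, hi, rfl⟩ | rfl
  · exact Nat.pow_lt_pow_right hp hi
  · exact pow_pos (by omega) j

lemma zero_mem_coveringDigits (p j : ℕ) : 0 ∈ coveringDigits p j :=
  Finset.mem_union_right _ (Finset.mem_singleton_self 0)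

lemma pow_mem_coveringDigits (p : ℕ) {i j : ℕ} (hi : i < j) : p ^ i ∈ coveringDigits p j :=
  Finset.mem_union_left _ (Finset.mem_image_of_mem _ (Finset.mem_range.mpr hi))

lemma card_coveringDigits {p : ℕ} (hp : 1 < p) (j : ℕ) : (coveringDigits p j).card = j + 1 := by
  rw [coveringDigits, Finset.card_union_of_disjoint, Finset.card_image_of_injective _
    (Nat.pow_right_injective hp), Finset.card_range, Finset.card_singleton]
  simp only [Finset.disjoint_singleton_right, Finset.mem_image, not_exists, not_and]
  exact fun i _ => pow_ne_zero i (by omega)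

lemma natCast_add_mul_mem_coveringSet {p ℓ j x : ℕ} (hp : 0 < p) (hj : j ≤ ℓ)
    (hx : x ∈ coveringDigits p j) (y : ZMod (p ^ ℓ)) :
    (x : ZMod (p ^ ℓ)) + y * p ^ j ∈ coveringSet p ℓ j := by
  have : NeZero (p ^ ℓ) := ⟨pow_ne_zero _ hp.ne'⟩
  refine Finset.mem_image.mpr ⟨(x, y.val % p ^ (ℓ - j)),
    Finset.mem_product.mpr ⟨hx, Finset.mem_range.mpr (Nat.mod_lt _ (pow_pos hp _))⟩, ?_⟩
  -- `y` and `y.val % p^(ℓ-j)` differ by a multiple of `p^(ℓ-j)`, which `p^j` kills modulo `p^ℓ`.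
  have hkill : ((p ^ (ℓ - j) * (y.val / p ^ (ℓ - j)) * p ^ j : ℕ) : ZMod (p ^ ℓ)) = 0 := by
    rw [mul_right_comm, ← pow_add, Nat.sub_add_cancel hj, Nat.cast_mul, ZMod.natCast_self,
      zero_mul]
  conv_rhs => rw [← ZMod.natCast_zmod_val y, ← Nat.div_add_mod y.val (p ^ (ℓ - j))]
  push_cast at hkill ⊢
  linear_combination -hkill

lemma isCoveringSet_coveringSet {p ℓ j lam : ℕ} (hp : p.Prime) (hj : j ≤ ℓ)
    (hlam : p ^ j ≤ lam) :
    IsCoveringSet (p ^ ℓ) lam 0 (coveringSet p ℓ j) := by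
  have : NeZero (p ^ ℓ) := ⟨pow_ne_zero _ hp.ne_zero⟩
  have hlam1 : 1 ≤ lam := (Nat.one_le_pow _ _ hp.pos).trans hlam
  intro a
  rw [← ZMod.natCast_zmod_val a]
  by_cases hdvd : p ^ j ∣ a.val
  · obtain ⟨t, ht⟩ := hdvd
    refine ⟨1, by norm_num, by exact_mod_cast hlam1, one_ne_zero, _,
      natCast_add_mul_mem_coveringSet hp.pos hj (zero_mem_coveringDigits p j) t, ?_⟩
    rw [ht]
    push_cast
    ring
  · obtain ⟨v, hv, m, hmp, hmlt, t, ht⟩ := Nat.exists_eq_mul_pow_add_mul_pow hp hdvd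
    have hm0 : m ≠ 0 := by
      rintro rfl
      exact hp.one_lt.ne' (Nat.coprime_zero_left p |>.mp hmp)
    have hunit : IsUnit (m : ZMod (p ^ ℓ)) :=
      (ZMod.isUnit_iff_coprime m _).mpr (hmp.pow_right ℓ)
    refine ⟨m, by positivity, by exact_mod_cast hmlt.le.trans hlam, by exact_mod_cast hm0, _,
      natCast_add_mul_mem_coveringSet hp.pos hj (pow_mem_coveringDigits p hv)
        ((m : ZMod (p ^ ℓ))⁻¹ * t), ?_⟩
    rw [ht]
    push_cast
    rw [mul_add, ← mul_assoc, ← mul_assoc, ZMod.mul_inv_of_unit _ hunit, one_mul, mul_comm]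

lemma add_mul_pow_lt_pow {p ℓ j s₀ s₁ : ℕ} (hj : j ≤ ℓ) (h₀ : s₀ < p ^ j)
    (h₁ : s₁ < p ^ (ℓ - j)) : s₀ + s₁ * p ^ j < p ^ ℓ :=
  calc s₀ + s₁ * p ^ j < (s₁ + 1) * p ^ j := by rw [add_one_mul]; omega
    _ ≤ p ^ (ℓ - j) * p ^ j := Nat.mul_le_mul_right _ h₁
    _ = p ^ ℓ := by rw [← pow_add, Nat.sub_add_cancel hj]

lemma card_coveringSet {p ℓ j : ℕ} (hp : 1 < p) (hj : j ≤ ℓ) :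
    (coveringSet p ℓ j).card = (j + 1) * p ^ (ℓ - j) := by
  rw [coveringSet, Finset.card_image_of_injOn, Finset.card_product, Finset.card_range,
    card_coveringDigits hp]
  rintro ⟨x₀, x₁⟩ hx ⟨y₀, y₁⟩ hy hxy
  simp only [Finset.coe_product, Set.mem_prod, Finset.mem_coe, Finset.mem_range] at hx hy
  have hx₀ := coveringDigits_lt hp hx.1
  have hy₀ := coveringDigits_lt hp hy.1
  have heq : x₀ + x₁ * p ^ j = y₀ + y₁ * p ^ j := by
    have := congrArg ZMod.val hxy
    rwa [ZMod.val_cast_of_lt (add_mul_pow_lt_pow hj hx₀ hx.2),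
      ZMod.val_cast_of_lt (add_mul_pow_lt_pow hj hy₀ hy.2)] at this
  have h₀ : x₀ = y₀ := by
    simpa [Nat.mod_eq_of_lt hx₀, Nat.mod_eq_of_lt hy₀] using congrArg (· % p ^ j) heq
  subst h₀
  simp [Nat.eq_of_mul_eq_mul_right (pow_pos (by omega) j) (Nat.add_left_cancel heq)]

lemma sqrt_lt_pow_of_lt_pow_succ {p j lam : ℕ} (hp : 0 < p) (hj : 1 ≤ j)
    (h : lam < p ^ (j + 1)) : √(lam : ℝ) < (p : ℝ) ^ j := by
  rw [Real.sqrt_lt' (by positivity), ← pow_mul]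
  exact_mod_cast h.trans_le (Nat.pow_le_pow_right hp (by omega))

lemma mul_pow_sub_lt_mul_pow_div_sqrt {p ℓ j lam : ℕ} {c : ℝ} (hc : 0 < c) (hp : 0 < p)
    (hj : 1 ≤ j) (hjℓ : j ≤ ℓ) (h1 : p ^ j ≤ lam) (h2 : lam < p ^ (j + 1)) :
    c * (p : ℝ) ^ (ℓ - j) < c * (p : ℝ) ^ ℓ / √(lam : ℝ) := by
  have hlam : (0 : ℝ) < lam := by exact_mod_cast (pow_pos hp j).trans_le h1
  rw [lt_div_iff₀ (Real.sqrt_pos.mpr hlam), ← pow_sub_mul_pow (p : ℝ) hjℓ, ← mul_assoc]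
  exact mul_lt_mul_of_pos_left (sqrt_lt_pow_of_lt_pow_succ hp hj h2) (by positivity)

theorem stmt7_general (p : ℕ) (hp : p.Prime) (ℓ j lam : ℕ)
    (hj1 : 1 ≤ j) (hj2 : j < ℓ) (h1 : p ^ j ≤ lam) (h2 : lam < p ^ (j + 1)) :
    IsCoveringSet (p ^ ℓ) lam 0
      ((((Finset.range j).image (fun i => p ^ i) ∪ {0}) ×ˢ
          Finset.range (p ^ (ℓ - j))).image
        (fun x => ((x.1 + x.2 * p ^ j : ℕ) : ZMod (p ^ ℓ)))) ∧
    ((((Finset.range j).image (fun i => p ^ i) ∪ {0}) ×ˢ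
          Finset.range (p ^ (ℓ - j))).image
        (fun x => ((x.1 + x.2 * p ^ j : ℕ) : ZMod (p ^ ℓ)))).card
      = (j + 1) * p ^ (ℓ - j) ∧
    ((j + 1) * p ^ (ℓ - j) : ℝ) < (j + 1) * (p : ℝ) ^ ℓ / Real.sqrt lam :=
  ⟨isCoveringSet_coveringSet hp hj2.le h1, card_coveringSet hp.one_lt hj2.le,
    mul_pow_sub_lt_mul_pow_div_sqrt (by positivity) hp.pos hj1 hj2.le h1 h2⟩

theorem stmt7 (p : ℕ) (hp : p.Prime) (ℓ j lam : ℕ) (hℓ : 2 ≤ ℓ)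
    (hj1 : 1 ≤ j) (hj2 : j < ℓ) (h1 : p ^ j ≤ lam) (h2 : lam < p ^ (j + 1))
    (h3 : lam < p ^ ℓ) :
    IsCoveringSet (p ^ ℓ) lam 0
      ((((Finset.range j).image (fun i => p ^ i) ∪ {0}) ×ˢ
          Finset.range (p ^ (ℓ - j))).image
        (fun x => ((x.1 + x.2 * p ^ j : ℕ) : ZMod (p ^ ℓ)))) ∧
    ((((Finset.range j).image (fun i => p ^ i) ∪ {0}) ×ˢ
          Finset.range (p ^ (ℓ - j))).image
        (fun x => ((x.1 + x.2 * p ^ j : ℕ) : ZMod (p ^ ℓ)))).card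
      = (j + 1) * p ^ (ℓ - j) ∧
    ((j + 1) * p ^ (ℓ - j) : ℝ) < (j + 1) * (p : ℝ) ^ ℓ / Real.sqrt lam :=
  stmt7_general p hp ℓ j lam hj1 hj2 h1 h2
end

section
/- Let p be a prime, ℓ ≥ 1 an integer, and let q̃ ≥ 2 be an integer with gcd(q̃, p) = 1; set q = q̃·p^ℓ. Let λ be an integer with 1 ≤ λ < q̃, and suppose S_0 ⊆ Z_{q̃} is a (λ,0;q̃)-covering set with #S_0 = s. Then there exists a (λ,0;q)-covering set S ⊆ Z_q with #S ≤ s·(⌊log q̃ / log p⌋ + 1)·p^ℓ. -/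
/-!
By the Chinese remainder theorem `Z_q ≅ Z_q̃ × Z_{p^ℓ}`. Write a multiplier `m ≤ λ < q̃` as
`m = p^j m'` with `p ∤ m'`; then `p^j ≤ q̃`, so `j ≤ ⌊log_p q̃⌋`, and `m s = m' (p^j s)` with `m'` a
unit modulo `p^ℓ`. Hence `a = (m s, b)` equals `m' · (p^j s, m'⁻¹ b)`, and the pairs `(p^j s, t)` with
`s ∈ S_0`, `j ≤ ⌊log_p q̃⌋`, `t ∈ Z_{p^ℓ}` form a covering set.
-/

theorem isCoveringSet_zero_iff {q lam : ℕ} {S : Finset (ZMod q)} :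
    IsCoveringSet q lam 0 S ↔
      ∀ a : ZMod q, ∃ m : ℕ, 0 < m ∧ m ≤ lam ∧ ∃ s ∈ S, (m : ZMod q) * s = a := by
  refine forall_congr' fun a => ⟨?_, ?_⟩
  · rintro ⟨m, hm0, hmlam, hmne, s, hs, hms⟩
    lift m to ℕ using by simpa using hm0
    exact ⟨m, by omega, by omega, s, hs, by simpa using hms⟩
  · rintro ⟨m, hm0, hmlam, s, hs, hms⟩
    exact ⟨m, by omega, by omega, by omega, s, hs, by simpa using hms⟩

theorem exists_isCoveringSet_mul_of_coprime {q r lam : ℕ} [NeZero r] (hqr : q.Coprime r)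
    (T : Finset (ZMod q))
    (hT : ∀ a : ZMod q, ∃ m : ℕ, 0 < m ∧ m ≤ lam ∧ m.Coprime r ∧ ∃ t ∈ T, (m : ZMod q) * t = a) :
    ∃ S : Finset (ZMod (q * r)), IsCoveringSet (q * r) lam 0 S ∧ S.card ≤ T.card * r := by
  set e := ZMod.chineseRemainder hqr
  refine ⟨(T ×ˢ Finset.univ).image e.symm, isCoveringSet_zero_iff.2 fun a => ?_, ?_⟩
  · obtain ⟨m, hm0, hmlam, hmr, t, ht, hmt⟩ := hT (e a).1
    set u := ZMod.unitOfCoprime m hmr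
    refine ⟨m, hm0, hmlam, e.symm (t, ↑u⁻¹ * (e a).2), ?_, e.injective ?_⟩
    · exact Finset.mem_image_of_mem _ (Finset.mem_product.2 ⟨ht, Finset.mem_univ _⟩)
    · rw [map_mul, map_natCast, RingEquiv.apply_symm_apply]
      refine Prod.ext ?_ ?_
      · simpa using hmt
      · show (m : ZMod r) * (↑u⁻¹ * (e a).2) = (e a).2
        rw [← ZMod.coe_unitOfCoprime m hmr, Units.mul_inv_cancel_left]
  · calc ((T ×ˢ Finset.univ).image e.symm).card ≤ (T ×ˢ (Finset.univ : Finset (ZMod r))).card :=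
          Finset.card_image_le
      _ = T.card * r := by simp [Finset.card_product, ZMod.card]

theorem IsCoveringSet.exists_coprime_mul_pow_mul {p q lam : ℕ} (hp : p.Prime) (hlam : lam < q)
    {S : Finset (ZMod q)} (hS : IsCoveringSet q lam 0 S) (a : ZMod q) :
    ∃ m : ℕ, 0 < m ∧ m ≤ lam ∧ m.Coprime p ∧
      ∃ j ≤ Nat.log p q, ∃ s ∈ S, (m : ZMod q) * ((p : ZMod q) ^ j * s) = a := by
  obtain ⟨n, hn0, hnlam, s, hs, hns⟩ := isCoveringSet_zero_iff.1 hS a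
  obtain ⟨j, m, hpm, rfl⟩ := Nat.exists_eq_pow_mul_and_not_dvd hn0.ne' p hp.ne_one
  have hm0 : 0 < m := Nat.pos_of_mul_pos_left hn0
  have hpow : p ^ j ≤ p ^ j * m := Nat.le_mul_of_pos_right _ hm0
  have hm : m ≤ p ^ j * m := Nat.le_mul_of_pos_left _ (pow_pos hp.pos j)
  refine ⟨m, hm0, hm.trans hnlam, ((hp.coprime_iff_not_dvd).2 hpm).symm,
    j, Nat.le_log_of_pow_le hp.one_lt (by omega), s, hs, ?_⟩
  rw [← hns]
  push_cast
  ring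

theorem stmt8_general (p : ℕ) (hp : p.Prime) (ℓ : ℕ) (qt : ℕ)
    (hcop : Nat.gcd qt p = 1) (lam : ℕ) (h2 : lam < qt)
    (S0 : Finset (ZMod qt)) (hS0 : IsCoveringSet qt lam 0 S0) :
    ∃ S : Finset (ZMod (qt * p ^ ℓ)), IsCoveringSet (qt * p ^ ℓ) lam 0 S ∧
      S.card ≤ S0.card * (Nat.log p qt + 1) * p ^ ℓ := by
  have : NeZero (p ^ ℓ) := ⟨pow_ne_zero ℓ hp.ne_zero⟩
  set T := (S0 ×ˢ Finset.range (Nat.log p qt + 1)).image fun x => (p : ZMod qt) ^ x.2 * x.1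
  have hT : ∀ a : ZMod qt, ∃ m : ℕ, 0 < m ∧ m ≤ lam ∧ m.Coprime (p ^ ℓ) ∧
      ∃ t ∈ T, (m : ZMod qt) * t = a := by
    intro a
    obtain ⟨m, hm0, hmlam, hmp, j, hj, s, hs, hms⟩ := hS0.exists_coprime_mul_pow_mul hp h2 a
    refine ⟨m, hm0, hmlam, hmp.pow_right ℓ, _, Finset.mem_image.2 ⟨(s, j), ?_, rfl⟩, hms⟩
    exact Finset.mem_product.2 ⟨hs, Finset.mem_range.2 (Nat.lt_succ_of_le hj)⟩
  obtain ⟨S, hS, hcard⟩ := exists_isCoveringSet_mul_of_coprime (Nat.Coprime.pow_right ℓ hcop) T hT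
  refine ⟨S, hS, hcard.trans (Nat.mul_le_mul_right _ ?_)⟩
  calc T.card ≤ (S0 ×ˢ Finset.range (Nat.log p qt + 1)).card := Finset.card_image_le
    _ = S0.card * (Nat.log p qt + 1) := by rw [Finset.card_product, Finset.card_range]

theorem stmt8 (p : ℕ) (hp : p.Prime) (ℓ : ℕ) (hℓ : 1 ≤ ℓ) (qt : ℕ) (hqt : 2 ≤ qt)
    (hcop : Nat.gcd qt p = 1) (lam : ℕ) (h1 : 1 ≤ lam) (h2 : lam < qt)
    (S0 : Finset (ZMod qt)) (hS0 : IsCoveringSet qt lam 0 S0) :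
    ∃ S : Finset (ZMod (qt * p ^ ℓ)), IsCoveringSet (qt * p ^ ℓ) lam 0 S ∧
      S.card ≤ S0.card * (Nat.log p qt + 1) * p ^ ℓ :=
  stmt8_general p hp ℓ qt hcop lam h2 S0 hS0
end

section
/- Let p be a prime, ℓ ≥ 1 an integer, and let q̃ ≥ 2 be an integer with gcd(q̃, p) = 1; set q = q̃·p^ℓ. Let λ be an integer with q̃ ≤ λ < q. Then the set S = {s_0 + s_1·q̃ : s_0 ∈ {p^i : i = 0, …, ⌊log q̃ / log p⌋} ∪ {0}, 0 ≤ s_1 < p^ℓ} is a (λ,0;q)-covering set of Z_q of cardinality at most (⌊log q̃ / log p⌋ + 2)·p^ℓ. -/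
open Finset

/-- The set `S` of the theorem. -/
def powerLiftSet (p qt ℓ : ℕ) : Finset (ZMod (qt * p ^ ℓ)) :=
  (((range (Nat.log p qt + 1)).image (fun i => p ^ i) ∪ {0}) ×ˢ range (p ^ ℓ)).image
    (fun x => ((x.1 + x.2 * qt : ℕ) : ZMod (qt * p ^ ℓ)))

lemma exists_pos_le_modEq {k : ℕ} (hk : 0 < k) (n : ℕ) : ∃ r, 0 < r ∧ r ≤ k ∧ r ≡ n [MOD k] := by
  by_cases h : n % k = 0
  · exact ⟨k, hk, le_rfl, by simp [Nat.ModEq, h]⟩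
  · exact ⟨n % k, Nat.pos_of_ne_zero h, (Nat.mod_lt n hk).le, Nat.mod_modEq n k⟩

lemma exists_pow_mul_eq_of_le {p k r : ℕ} (hp : p.Prime) (hr : 0 < r) (hrk : r ≤ k) :
    ∃ i m, p ^ i * m = r ∧ m.Coprime p ∧ i ≤ Nat.log p k ∧ 0 < m ∧ m ≤ k := by
  obtain ⟨i, m, hpm, rfl⟩ := Nat.exists_eq_pow_mul_and_not_dvd hr.ne' p hp.one_lt.ne'
  have hm : 0 < m := Nat.pos_of_mul_pos_left hr
  refine ⟨i, m, rfl, (hp.coprime_iff_not_dvd.mpr hpm).symm, ?_, hm, ?_⟩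
  · exact Nat.le_log_of_pow_le hp.one_lt ((Nat.le_mul_of_pos_right _ hm).trans hrk)
  · exact (Nat.le_mul_of_pos_left m (pow_pos hp.pos i)).trans hrk

lemma exists_lt_add_mul_modEq {a N : ℕ} [NeZero N] (ha : a.Coprime N) (b n : ℕ) :
    ∃ s < N, b + a * s ≡ n [MOD N] := by
  set u := ZMod.unitOfCoprime a ha
  refine ⟨((u⁻¹ : (ZMod N)ˣ) * (n - b) : ZMod N).val, ZMod.val_lt _, ?_⟩
  rw [← ZMod.natCast_eq_natCast_iff]
  have hu : (a : ZMod N) = u := (ZMod.coe_unitOfCoprime a ha).symm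
  push_cast [ZMod.natCast_zmod_val]
  rw [hu, ← mul_assoc, Units.mul_inv, one_mul, add_sub_cancel]

lemma exists_mul_pow_add_mul_modEq {p qt : ℕ} (hp : p.Prime) (hqt : 0 < qt) (hcop : qt.Coprime p)
    (ℓ n : ℕ) : ∃ m i s, 0 < m ∧ m ≤ qt ∧ i ≤ Nat.log p qt ∧ s < p ^ ℓ ∧
      m * (p ^ i + s * qt) ≡ n [MOD qt * p ^ ℓ] := by
  obtain ⟨r, hr, hrq, hrn⟩ := exists_pos_le_modEq hqt n
  obtain ⟨i, m, rfl, hmp, hi, hm, hmq⟩ := exists_pow_mul_eq_of_le hp hr hrq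
  have : NeZero (p ^ ℓ) := ⟨pow_ne_zero ℓ hp.ne_zero⟩
  obtain ⟨s, hs, hsn⟩ := exists_lt_add_mul_modEq ((hmp.mul_left hcop).pow_right ℓ) (m * p ^ i) n
  refine ⟨m, i, s, hm, hmq, hi, hs,
    (Nat.modEq_and_modEq_iff_modEq_mul (hcop.pow_right ℓ)).mp ⟨?_, ?_⟩⟩
  · calc m * (p ^ i + s * qt) = p ^ i * m + qt * (m * s) := by ring
      _ ≡ p ^ i * m [MOD qt] := Nat.add_mul_mod_self_left _ _ _
      _ ≡ n [MOD qt] := hrn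
  · convert hsn using 1
    ring

theorem isCoveringSet_powerLiftSet {p qt ℓ lam : ℕ} (hp : p.Prime) (hqt : 0 < qt)
    (hcop : qt.Coprime p) (hlam : qt ≤ lam) :
    IsCoveringSet (qt * p ^ ℓ) lam 0 (powerLiftSet p qt ℓ) := by
  have : NeZero (qt * p ^ ℓ) := ⟨(Nat.mul_pos hqt (pow_pos hp.pos ℓ)).ne'⟩
  intro a
  obtain ⟨m, i, s, hm, hmq, hi, hs, hmod⟩ := exists_mul_pow_add_mul_modEq hp hqt hcop ℓ a.val
  refine ⟨m, by positivity, by exact_mod_cast hmq.trans hlam, by positivity,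
    ((p ^ i + s * qt : ℕ) : ZMod (qt * p ^ ℓ)), ?_, ?_⟩
  · exact mem_image.mpr ⟨(p ^ i, s), mem_product.mpr
      ⟨mem_union_left _ (mem_image_of_mem _ (mem_range.mpr (Nat.lt_succ_of_le hi))),
        mem_range.mpr hs⟩, rfl⟩
  · rw [Int.cast_natCast, ← Nat.cast_mul, (ZMod.natCast_eq_natCast_iff _ _ _).mpr hmod,
      ZMod.natCast_zmod_val]

theorem card_powerLiftSet_le (p qt ℓ : ℕ) :
    (powerLiftSet p qt ℓ).card ≤ (Nat.log p qt + 2) * p ^ ℓ := by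
  have hbase : ((range (Nat.log p qt + 1)).image (fun i => p ^ i) ∪ {0}).card ≤ Nat.log p qt + 2 :=
    calc _ ≤ ((range (Nat.log p qt + 1)).image (fun i => p ^ i)).card + 1 := card_union_le _ _
      _ ≤ (range (Nat.log p qt + 1)).card + 1 := Nat.add_le_add_right card_image_le 1
      _ = Nat.log p qt + 2 := by rw [card_range]
  calc (powerLiftSet p qt ℓ).card ≤ _ := card_image_le
    _ = _ * p ^ ℓ := by rw [card_product, card_range]
    _ ≤ (Nat.log p qt + 2) * p ^ ℓ := Nat.mul_le_mul_right _ hbase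

theorem stmt9_general (p : ℕ) (hp : p.Prime) (ℓ : ℕ) (qt : ℕ) (hqt : 2 ≤ qt)
    (hcop : Nat.gcd qt p = 1) (lam : ℕ) (h1 : qt ≤ lam) :
    IsCoveringSet (qt * p ^ ℓ) lam 0
      ((((Finset.range (Nat.log p qt + 1)).image (fun i => p ^ i) ∪ {0}) ×ˢ
          Finset.range (p ^ ℓ)).image
        (fun x => ((x.1 + x.2 * qt : ℕ) : ZMod (qt * p ^ ℓ)))) ∧
    ((((Finset.range (Nat.log p qt + 1)).image (fun i => p ^ i) ∪ {0}) ×ˢ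
          Finset.range (p ^ ℓ)).image
        (fun x => ((x.1 + x.2 * qt : ℕ) : ZMod (qt * p ^ ℓ)))).card
      ≤ (Nat.log p qt + 2) * p ^ ℓ :=
  ⟨isCoveringSet_powerLiftSet hp (by omega) hcop h1, card_powerLiftSet_le p qt ℓ⟩

theorem stmt9 (p : ℕ) (hp : p.Prime) (ℓ : ℕ) (hℓ : 1 ≤ ℓ) (qt : ℕ) (hqt : 2 ≤ qt)
    (hcop : Nat.gcd qt p = 1) (lam : ℕ) (h1 : qt ≤ lam) (h2 : lam < qt * p ^ ℓ) :
    IsCoveringSet (qt * p ^ ℓ) lam 0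
      ((((Finset.range (Nat.log p qt + 1)).image (fun i => p ^ i) ∪ {0}) ×ˢ
          Finset.range (p ^ ℓ)).image
        (fun x => ((x.1 + x.2 * qt : ℕ) : ZMod (qt * p ^ ℓ)))) ∧
    ((((Finset.range (Nat.log p qt + 1)).image (fun i => p ^ i) ∪ {0}) ×ˢ
          Finset.range (p ^ ℓ)).image
        (fun x => ((x.1 + x.2 * qt : ℕ) : ZMod (qt * p ^ ℓ)))).card
      ≤ (Nat.log p qt + 2) * p ^ ℓ :=
  stmt9_general p hp ℓ qt hqt hcop lam h1
end

section
/- For any integer q ≥ 1 and non-negative integers λ, μ < q with λ + μ ≥ 1, one has ω_{λ,μ}(q) ≤ Σ_{d | q} ω*_{λ,μ}(q/d), where the sum is over the positive divisors d of q (and λ, μ are reduced modulo q/d where necessary, i.e., ω*_{λ,μ}(q') is interpreted with the set M = {−μ,…,λ}\{0} taken modulo q'). -/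
/-- `ω_{lam,mu}(q)`: the minimal cardinality of a `(lam, mu; q)`-covering set. -/
noncomputable def omegaCov (q lam mu : ℕ) : ℕ :=
  sInf {n | ∃ S : Finset (ZMod q), IsCoveringSet q lam mu S ∧ S.card = n}

/-- `ω*_{lam,mu}(q)`: the minimal cardinality of a set `S ⊆ Z_q` whose product set
`M·S` covers all invertible residue classes modulo `q`. -/
noncomputable def omegaStar (q lam mu : ℕ) : ℕ :=
  sInf {n | ∃ S : Finset (ZMod q), S.card = n ∧ ∀ a : ZMod q, IsUnit a →
    ∃ m : ℤ, -(mu : ℤ) ≤ m ∧ m ≤ (lam : ℤ) ∧ m ≠ 0 ∧ ∃ s ∈ S, (m : ZMod q) * s = a}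

/-!
Every `a ∈ Z_q` is `d * u` with `d = gcd(a, q)` and `u` a unit modulo `q / d`. If `S_d` is a
minimal set with `M·S_d ⊇ Z_{q/d}^*`, then `m * s = u` in `Z_{q/d}` lifts to `m * (d s) = d u`
in `Z_q`, so the union over `d ∣ q` of the sets `d · S_d ⊆ Z_q` is a covering set of `Z_q`.
-/

/-- The sets admissible in the definition of `omegaStar`. -/
def IsUnitCoveringSet (q lam mu : ℕ) (S : Finset (ZMod q)) : Prop :=
  ∀ a : ZMod q, IsUnit a → ∃ m : ℤ, -(mu : ℤ) ≤ m ∧ m ≤ (lam : ℤ) ∧ m ≠ 0 ∧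
    ∃ s ∈ S, (m : ZMod q) * s = a

lemma isUnitCoveringSet_univ (q : ℕ) [Fintype (ZMod q)] {lam mu : ℕ} (h : 1 ≤ lam + mu) :
    IsUnitCoveringSet q lam mu Finset.univ := by
  intro a _
  rcases Nat.eq_zero_or_pos lam with hlam | hlam
  · exact ⟨-1, by omega, by omega, by norm_num, -a, Finset.mem_univ _, by push_cast; ring⟩
  · exact ⟨1, by omega, by omega, one_ne_zero, a, Finset.mem_univ _, by push_cast; ring⟩

lemma exists_isUnitCoveringSet_card_eq_omegaStar (q : ℕ) [NeZero q] {lam mu : ℕ}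
    (h : 1 ≤ lam + mu) :
    ∃ S : Finset (ZMod q), S.card = omegaStar q lam mu ∧ IsUnitCoveringSet q lam mu S :=
  Nat.sInf_mem (s := {n | ∃ S : Finset (ZMod q), S.card = n ∧ IsUnitCoveringSet q lam mu S})
    ⟨_, Finset.univ, rfl, isUnitCoveringSet_univ q h⟩

lemma omegaCov_le_card {q lam mu : ℕ} {S : Finset (ZMod q)} (hS : IsCoveringSet q lam mu S) :
    omegaCov q lam mu ≤ S.card :=
  Nat.sInf_le ⟨S, hS, rfl⟩

lemma neZero_div_of_mem_divisors {q d : ℕ} (hd : d ∈ q.divisors) : NeZero (q / d) :=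
  ⟨(Nat.div_pos (Nat.divisor_le hd) (Nat.pos_of_mem_divisors hd)).ne'⟩

lemma exists_mem_divisors_isUnit_mul_eq {q : ℕ} [NeZero q] (a : ZMod q) :
    ∃ d ∈ q.divisors, ∃ u : ℕ, IsUnit (u : ZMod (q / d)) ∧ (d : ZMod q) * u = a := by
  have hg : a.val.gcd q ∣ q := Nat.gcd_dvd_right a.val q
  have hgpos : 0 < a.val.gcd q := Nat.gcd_pos_of_pos_right _ (NeZero.pos q)
  refine ⟨a.val.gcd q, Nat.mem_divisors.mpr ⟨hg, NeZero.ne q⟩, a.val / a.val.gcd q,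
    (ZMod.isUnit_iff_coprime _ _).mpr (Nat.coprime_div_gcd_div_gcd hgpos), ?_⟩
  rw [← Nat.cast_mul, Nat.mul_div_cancel' (Nat.gcd_dvd_left _ _), ZMod.natCast_zmod_val]

/-- Multiplication by `d` is well defined from `Z_e` to `Z_{d e}`. -/
lemma natCast_mul_intCast_eq_of_modEq {d e q : ℕ} (hq : d * e = q) {k l : ℤ}
    (hkl : k ≡ l [ZMOD e]) : (d : ZMod q) * k = d * l := by
  have hsub : (q : ℤ) ∣ d * k - d * l := by
    rw [← mul_sub, ← hq, Nat.cast_mul]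
    exact mul_dvd_mul_left _ (Int.ModEq.dvd hkl.symm)
  have := (ZMod.intCast_eq_intCast_iff_dvd_sub (d * l) (d * k) q).mpr hsub
  push_cast at this
  exact this.symm

lemma intCast_mul_natCast_mul_val_eq {q d : ℕ} (hd : d ∣ q) [NeZero (q / d)] {m : ℤ}
    {s : ZMod (q / d)} {u : ℕ} (hmsu : (m : ZMod (q / d)) * s = u) :
    (m : ZMod q) * ((d : ZMod q) * s.val) = d * u := by
  have hmod : m * (s.val : ℤ) ≡ u [ZMOD (q / d : ℕ)] := by
    rw [← ZMod.intCast_eq_intCast_iff]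
    push_cast
    rw [ZMod.natCast_zmod_val, hmsu]
  have := natCast_mul_intCast_eq_of_modEq (Nat.mul_div_cancel' hd) hmod
  push_cast at this
  rw [← this]
  ring

lemma isCoveringSet_biUnion_divisors {q lam mu : ℕ} [NeZero q]
    (S : ∀ d : ℕ, Finset (ZMod (q / d)))
    (hS : ∀ d ∈ q.divisors, IsUnitCoveringSet (q / d) lam mu (S d)) :
    IsCoveringSet q lam mu
      (q.divisors.biUnion fun d => (S d).image fun s => (d : ZMod q) * s.val) := by
  intro a
  obtain ⟨d, hd, u, hu, rfl⟩ := exists_mem_divisors_isUnit_mul_eq a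
  obtain ⟨m, hm_ge, hm_le, hm_ne, s, hs, hmsu⟩ := hS d hd u hu
  have := neZero_div_of_mem_divisors hd
  exact ⟨m, hm_ge, hm_le, hm_ne, _, Finset.mem_biUnion.mpr ⟨d, hd, Finset.mem_image_of_mem _ hs⟩,
    intCast_mul_natCast_mul_val_eq (Nat.dvd_of_mem_divisors hd) hmsu⟩

theorem stmt13_general (q lam mu : ℕ) (hq : 1 ≤ q) (h : 1 ≤ lam + mu) :
    omegaCov q lam mu ≤ ∑ d ∈ q.divisors, omegaStar (q / d) lam mu := by
  have : NeZero q := ⟨by omega⟩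
  have hmin : ∀ d, ∃ S : Finset (ZMod (q / d)), d ∈ q.divisors →
      S.card = omegaStar (q / d) lam mu ∧ IsUnitCoveringSet (q / d) lam mu S := by
    intro d
    by_cases hd : d ∈ q.divisors
    · have := neZero_div_of_mem_divisors hd
      obtain ⟨S, hS⟩ := exists_isUnitCoveringSet_card_eq_omegaStar (q / d) h
      exact ⟨S, fun _ => hS⟩
    · exact ⟨∅, fun hd' => absurd hd' hd⟩
  choose S hS using hmin
  calc omegaCov q lam mu
      ≤ (q.divisors.biUnion fun d => (S d).image fun s => (d : ZMod q) * s.val).card :=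
        omegaCov_le_card (isCoveringSet_biUnion_divisors S fun d hd => (hS d hd).2)
    _ ≤ ∑ d ∈ q.divisors, (S d).card :=
        Finset.card_biUnion_le.trans (Finset.sum_le_sum fun _ _ => Finset.card_image_le)
    _ = ∑ d ∈ q.divisors, omegaStar (q / d) lam mu :=
        Finset.sum_congr rfl fun d hd => (hS d hd).1

theorem stmt13 (q lam mu : ℕ) (hq : 1 ≤ q) (hlam : lam < q) (hmu : mu < q)
    (h : 1 ≤ lam + mu) :
    omegaCov q lam mu ≤ ∑ d ∈ q.divisors, omegaStar (q / d) lam mu :=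
  stmt13_general q lam mu hq h
end

section
/- There exists an absolute constant c > 0 such that for all integers q ≥ 3, all non-negative integers λ ≥ μ with λ ≥ 1, and all positive integers N with N·λ < q, one has ν_{λ,μ}(q,N) ≥ c·(λ+μ)·N·(log q)^{−3}. -/
/-- The product set `M·S = {m·s mod q : m ∈ {-mu,…,lam}\{0}, s ∈ S}` as a finset of `ZMod q`. -/
noncomputable def prodSet (q lam mu : ℕ) (S : Finset (ZMod q)) : Finset (ZMod q) :=
  (((Finset.Icc (-(mu : ℤ)) (lam : ℤ)).erase 0) ×ˢ S).image
    (fun p => (p.1 : ZMod q) * p.2)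

/-- `ν_{lam,mu}(q, r)`: the maximal size of `M·S` over subsets `S ⊆ Z_q` of cardinality `r`. -/
noncomputable def nu (q lam mu r : ℕ) : ℕ :=
  sSup {n | ∃ S : Finset (ZMod q), S.card = r ∧ (prodSet q lam mu S).card = n}

/-!
Take `S = {1, …, N}`. As `λN < q`, reduction mod `q` is injective on the products `m s` with
`1 ≤ m ≤ λ`, `1 ≤ s ≤ N`, so `ν_{λ,μ}(q, N) ≥ #({1,…,λ}·{1,…,N})`. By Cauchy–Schwarz this
product set has at least `λ²N² / E` elements, `E` the multiplicative energy. Writing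
`m = g a`, `m' = g b` with `g = gcd(m, m')`, the solutions of `m s = m' s'` are `s = b t`,
`s' = a t`, whence `E ≤ (∑_{g ≤ λ} λ/g)(∑_{b ≤ λ} N/b) ≤ λN(1 + log λ)²`. Finally
`(1 + log λ)² ≤ 4 (log q)³` and `λ + μ ≤ 2λ`.
-/

open Finset
open scoped Pointwise Combinatorics.Additive

lemma Nat.div_gcd_dvd_of_mul_eq_mul {m m' s s' : ℕ} (hm : 0 < m) (h : m * s = m' * s') :
    m' / m.gcd m' ∣ s := by
  have hg : 0 < m.gcd m' := Nat.gcd_pos_of_pos_left _ hm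
  have hcop : (m / m.gcd m').Coprime (m' / m.gcd m') := Nat.coprime_div_gcd_div_gcd hg
  refine hcop.symm.dvd_of_dvd_mul_left ⟨s', Nat.eq_of_mul_eq_mul_left hg ?_⟩
  rw [← mul_assoc, Nat.mul_div_cancel' (Nat.gcd_dvd_left m m'), ← mul_assoc,
    Nat.mul_div_cancel' (Nat.gcd_dvd_right m m'), h]

lemma Nat.eq_div_gcd_mul_of_mul_eq_mul {m m' s s' : ℕ} (hm : 0 < m) (hm' : 0 < m')
    (h : m * s = m' * s') : s' = m / m.gcd m' * (s / (m' / m.gcd m')) := by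
  set g := m.gcd m'
  set a := m / g
  set b := m' / g
  have hm_eq : g * a = m := Nat.mul_div_cancel' (Nat.gcd_dvd_left m m')
  have hm'_eq : g * b = m' := Nat.mul_div_cancel' (Nat.gcd_dvd_right m m')
  have hs_eq : b * (s / b) = s := Nat.mul_div_cancel' (Nat.div_gcd_dvd_of_mul_eq_mul hm h)
  refine Nat.eq_of_mul_eq_mul_left hm' ?_
  calc m' * s' = g * a * (b * (s / b)) := by rw [hm_eq, hs_eq, h]
    _ = g * b * (a * (s / b)) := by ring
    _ = m' * (a * (s / b)) := by rw [hm'_eq]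

def hyperbolaPoints (L C : ℕ) : Finset (Σ _ : ℕ, ℕ) :=
  (Icc 1 L).sigma fun g => Icc 1 (C / g)

lemma card_hyperbolaPoints_le (L C : ℕ) :
    (#(hyperbolaPoints L C) : ℝ) ≤ C * (1 + Real.log L) := by
  have harmonic : ∑ g ∈ Icc 1 L, (g : ℝ)⁻¹ ≤ 1 + Real.log L := by
    simpa [harmonic_eq_sum_Icc] using harmonic_le_one_add_log L
  calc (#(hyperbolaPoints L C) : ℝ) = ∑ g ∈ Icc 1 L, ((C / g : ℕ) : ℝ) := by
        simp [hyperbolaPoints]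
    _ ≤ ∑ g ∈ Icc 1 L, (C : ℝ) * (g : ℝ)⁻¹ := sum_le_sum fun g _ => Nat.cast_div_le
    _ ≤ C * (1 + Real.log L) := by
        rw [← mul_sum]
        gcongr

lemma mulEnergy_Icc_le (L N : ℕ) :
    Eₘ[Icc 1 L, Icc 1 N] ≤ #(hyperbolaPoints L L) * #(hyperbolaPoints L N) := by
  rw [← card_product, mulEnergy]
  let code : (ℕ × ℕ) × ℕ × ℕ → (Σ _ : ℕ, ℕ) × (Σ _ : ℕ, ℕ) := fun x =>
    (⟨x.1.1.gcd x.1.2, x.1.1 / x.1.1.gcd x.1.2⟩,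
      ⟨x.1.2 / x.1.1.gcd x.1.2, x.2.1 / (x.1.2 / x.1.1.gcd x.1.2)⟩)
  let decode : (Σ _ : ℕ, ℕ) × (Σ _ : ℕ, ℕ) → (ℕ × ℕ) × ℕ × ℕ := fun y =>
    ((y.1.1 * y.1.2, y.1.1 * y.2.1), (y.2.1 * y.2.2, y.1.2 * y.2.2))
  have code_spec : ∀ x ∈ {x ∈ (Icc 1 L ×ˢ Icc 1 L) ×ˢ Icc 1 N ×ˢ Icc 1 N |
      x.1.1 * x.2.1 = x.1.2 * x.2.2},
      code x ∈ hyperbolaPoints L L ×ˢ hyperbolaPoints L N ∧ decode (code x) = x := by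
    rintro ⟨⟨m, m'⟩, s, s'⟩ hx
    simp only [mem_filter, mem_product, mem_Icc] at hx
    obtain ⟨⟨⟨⟨hm, hmL⟩, hm', hm'L⟩, ⟨hs, hsN⟩, -⟩, h⟩ := hx
    have hg : 0 < m.gcd m' := Nat.gcd_pos_of_pos_left _ hm
    have hb : 0 < m' / m.gcd m' := Nat.div_pos (Nat.gcd_le_right _ hm') hg
    have hbs : m' / m.gcd m' ∣ s := Nat.div_gcd_dvd_of_mul_eq_mul hm h
    simp only [code, decode, hyperbolaPoints, mem_product, mem_sigma, mem_Icc, Prod.mk.injEq]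
    exact ⟨⟨⟨⟨hg, (Nat.gcd_le_left _ hm).trans hmL⟩,
        Nat.div_pos (Nat.gcd_le_left _ hm) hg, Nat.div_le_div_right hmL⟩,
        ⟨hb, (Nat.div_le_self _ _).trans hm'L⟩,
        Nat.div_pos (Nat.le_of_dvd hs hbs) hb, Nat.div_le_div_right hsN⟩,
      ⟨Nat.mul_div_cancel' (Nat.gcd_dvd_left m m'), Nat.mul_div_cancel' (Nat.gcd_dvd_right m m')⟩,
      Nat.mul_div_cancel' hbs, (Nat.eq_div_gcd_mul_of_mul_eq_mul hm hm' h).symm⟩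
  exact card_le_card_of_injOn code (fun x hx => (code_spec x hx).1)
    (Set.LeftInvOn.injOn (f₁' := decode) fun x hx => (code_spec x hx).2)

lemma card_Icc_mul_Icc_ge (L N : ℕ) :
    (L : ℝ) * N / (1 + Real.log L) ^ 2 ≤ #(Icc 1 L * Icc 1 N) := by
  rcases Nat.eq_zero_or_pos (L * N) with hLN | hLN
  · simp [← Nat.cast_mul, hLN]
  have cauchy_schwarz : ((L * N : ℕ) : ℝ) ^ 2 ≤ #(Icc 1 L * Icc 1 N) * Eₘ[Icc 1 L, Icc 1 N] := by
    exact_mod_cast (by simpa [mul_pow] using le_card_mul_mul_mulEnergy (Icc 1 L) (Icc 1 N))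
  have energy : (Eₘ[Icc 1 L, Icc 1 N] : ℝ) ≤ L * N * (1 + Real.log L) ^ 2 := by
    calc (Eₘ[Icc 1 L, Icc 1 N] : ℝ)
        ≤ #(hyperbolaPoints L L) * #(hyperbolaPoints L N) := by
          exact_mod_cast mulEnergy_Icc_le L N
      _ ≤ (L * (1 + Real.log L)) * (N * (1 + Real.log L)) := by
          gcongr <;> exact card_hyperbolaPoints_le _ _
      _ = L * N * (1 + Real.log L) ^ 2 := by ring
  have hLN' : (0 : ℝ) < L * N := by exact_mod_cast hLN
  rw [div_le_iff₀ (by positivity)]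
  refine le_of_mul_le_mul_right ?_ hLN'
  calc (L : ℝ) * N * (L * N) = ((L * N : ℕ) : ℝ) ^ 2 := by push_cast; ring
    _ ≤ #(Icc 1 L * Icc 1 N) * (L * N * (1 + Real.log L) ^ 2) := by
        refine cauchy_schwarz.trans ?_
        gcongr
    _ = _ := by ring

lemma ZMod.natCast_injOn_Iio (q : ℕ) : Set.InjOn (Nat.cast : ℕ → ZMod q) (Set.Iio q) :=
  fun a ha b hb h => by
    simpa [ZMod.val_natCast_of_lt ha, ZMod.val_natCast_of_lt hb] using congrArg ZMod.val h

lemma card_prodSet_le_nu {q : ℕ} [NeZero q] (lam mu : ℕ) (S : Finset (ZMod q)) :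
    #(prodSet q lam mu S) ≤ nu q lam mu #S :=
  le_csSup ⟨Fintype.card (ZMod q), by rintro _ ⟨T, -, rfl⟩; exact card_le_univ _⟩ ⟨S, rfl, rfl⟩

lemma image_Icc_mul_Icc_subset_prodSet (q lam mu N : ℕ) :
    (Icc 1 lam * Icc 1 N).image (Nat.cast : ℕ → ZMod q) ⊆
      prodSet q lam mu ((Icc 1 N).image Nat.cast) := by
  intro x hx
  obtain ⟨_, hmul, rfl⟩ := mem_image.1 hx
  obtain ⟨m, hm, s, hs, rfl⟩ := mem_mul.1 hmul
  rw [mem_Icc] at hm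
  refine mem_image.2 ⟨((m : ℤ), (s : ZMod q)), mem_product.2 ⟨?_, mem_image_of_mem _ hs⟩, by simp⟩
  simp only [mem_erase, mem_Icc]
  omega

lemma card_Icc_mul_Icc_le_nu {q lam N : ℕ} (mu : ℕ) (hlam : 1 ≤ lam) (hq : N * lam < q) :
    #(Icc 1 lam * Icc 1 N) ≤ nu q lam mu N := by
  have : NeZero q := ⟨by omega⟩
  have hN : N < q := by nlinarith
  have hcast : Set.InjOn (Nat.cast : ℕ → ZMod q) (Icc 1 lam * Icc 1 N : Finset ℕ) := by
    refine (ZMod.natCast_injOn_Iio q).mono fun x hx => ?_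
    obtain ⟨m, hm, s, hs, rfl⟩ := mem_mul.1 hx
    rw [mem_Icc] at hm hs
    show m * s < q
    nlinarith
  have hS : #((Icc 1 N).image (Nat.cast : ℕ → ZMod q)) = N := by
    rw [card_image_of_injOn, Nat.card_Icc, Nat.add_sub_cancel]
    exact (ZMod.natCast_injOn_Iio q).mono fun x hx => by
      simp only [coe_Icc, Set.mem_Icc] at hx
      exact show x < q by omega
  calc #(Icc 1 lam * Icc 1 N) = #((Icc 1 lam * Icc 1 N).image (Nat.cast : ℕ → ZMod q)) :=
        (card_image_of_injOn hcast).symm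
    _ ≤ #(prodSet q lam mu ((Icc 1 N).image Nat.cast)) :=
        card_le_card (image_Icc_mul_Icc_subset_prodSet q lam mu N)
    _ ≤ nu q lam mu N := (card_prodSet_le_nu lam mu _).trans_eq (by rw [hS])

lemma div_log_cube_le_div_one_add_log_sq {q lam mu : ℕ} (N : ℕ) (hq : 3 ≤ q) (hmu : mu ≤ lam)
    (hlam : lam < q) :
    1 / 8 * ((lam : ℝ) + mu) * N / Real.log q ^ 3 ≤ lam * N / (1 + Real.log lam) ^ 2 := by
  have hlogq : 1 ≤ Real.log q := by
    rw [Real.le_log_iff_exp_le (by positivity)]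
    calc Real.exp 1 ≤ 3 := (Real.exp_one_lt_d9.trans (by norm_num)).le
      _ ≤ q := by exact_mod_cast hq
  have hlam_le : Real.log lam ≤ Real.log q := by
    rcases Nat.eq_zero_or_pos lam with rfl | hlam0
    · simpa using zero_le_one.trans hlogq
    · exact Real.log_le_log (by exact_mod_cast hlam0) (by exact_mod_cast hlam.le)
  have hsq : (1 + Real.log lam) ^ 2 ≤ 4 * Real.log q ^ 3 :=
    calc (1 + Real.log lam) ^ 2 ≤ (2 * Real.log q) ^ 2 := by gcongr; linarith
      _ = 4 * Real.log q ^ 2 * 1 := by ring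
      _ ≤ 4 * Real.log q ^ 2 * Real.log q := by gcongr
      _ = 4 * Real.log q ^ 3 := by ring
  have hmu' : (lam : ℝ) + mu ≤ 2 * lam := by norm_cast; omega
  rw [div_le_div_iff₀ (by positivity) (by positivity)]
  calc 1 / 8 * ((lam : ℝ) + mu) * N * (1 + Real.log lam) ^ 2
      ≤ 1 / 8 * (2 * lam) * N * (4 * Real.log q ^ 3) := by gcongr
    _ = lam * N * Real.log q ^ 3 := by ring

theorem stmt18 : ∃ c : ℝ, c > 0 ∧ ∀ q lam mu N : ℕ, 3 ≤ q → mu ≤ lam → 1 ≤ lam →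
    1 ≤ N → N * lam < q →
    c * ((lam : ℝ) + (mu : ℝ)) * (N : ℝ) / Real.log q ^ 3 ≤ (nu q lam mu N : ℝ) := by
  refine ⟨1 / 8, by norm_num, fun q lam mu N hq hmu hlam hN hNq => ?_⟩
  have hlam_lt : lam < q := lt_of_le_of_lt (Nat.le_mul_of_pos_left lam hN) hNq
  calc 1 / 8 * ((lam : ℝ) + mu) * N / Real.log q ^ 3
      ≤ lam * N / (1 + Real.log lam) ^ 2 := div_log_cube_le_div_one_add_log_sq N hq hmu hlam_lt
    _ ≤ #(Icc 1 lam * Icc 1 N) := card_Icc_mul_Icc_ge lam N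
    _ ≤ nu q lam mu N := by exact_mod_cast card_Icc_mul_Icc_le_nu mu hlam hNq
end
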